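/- Let X'_1 = { {1,2,5}, {2,5,6}, {1,5,6}, {4,5,6}, {3,5,6}, {3,4,6}, {1,3,4}, {2,3,4}, {1,2,3}, {1,2,4} } ⊆ J(6,3). The stabilizer in S_6 of the set X'_1 equals the subgroup generated by the transposition (1,2) and the permutation (1,3,2,4)(5,6), which is isomorphic to the dihedral group of order 8. -/
import Mathlib


open Pointwise

/-- The coloring part `X′₁ = {125, 256, 156, 456, 356, 346, 134, 234, 123, 124}`
as a family of 3-subsets, with `{1,…,6}` identified with `Fin 6` (so `6` is `0`). -/
def X1' : Finset (Finset (Fin 6)) :=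
  {{1, 2, 5}, {2, 5, 6}, {1, 5, 6}, {4, 5, 6}, {3, 5, 6},
   {3, 4, 6}, {1, 3, 4}, {2, 3, 4}, {1, 2, 3}, {1, 2, 4}}

/-- The 4-cycle `(1,3,2,4)` as a permutation of `Fin 6`. -/
def c1324 : Equiv.Perm (Fin 6) :=
  Equiv.swap 1 3 * Equiv.swap 3 2 * Equiv.swap 2 4


def a6 : Equiv.Perm (Fin 6) := Equiv.swap 1 2
def b6 : Equiv.Perm (Fin 6) := c1324 * Equiv.swap 5 6

/-- number of triples of `X1'` containing both `x` and `y` -/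
def dd (x y : Fin 6) : ℕ := (X1'.filter (fun s => x ∈ s ∧ y ∈ s)).card

lemma dd_invariant (σ : Equiv.Perm (Fin 6)) (h : σ • X1' = X1') (x y : Fin 6) :
    dd (σ x) (σ y) = dd x y := by
  have h2 : X1'.filter (fun s => σ x ∈ s ∧ σ y ∈ s)
      = (σ • X1').filter (fun s => σ x ∈ s ∧ σ y ∈ s) := by rw [h]
  simp only [dd]
  rw [h2, Finset.smul_finset_def, Finset.filter_image,
    Finset.card_image_of_injective _ (MulAction.injective σ)]
  exact congrArg Finset.card <| Finset.filter_congr fun s _ => by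
    rw [show σ x = σ • x from rfl, show σ y = σ • y from rfl,
      Finset.smul_mem_smul_finset_iff, Finset.smul_mem_smul_finset_iff]

lemma pin50 : ∀ x y : Fin 6, x ≠ y → dd x y = 4 →
    (x = 5 ∧ y = 0) ∨ (x = 0 ∧ y = 5) := by decide

lemma pinA : ∀ u : Fin 6, u ≠ 5 → u ≠ 0 → dd u 5 = 2 → u = 1 ∨ u = 2 := by decide
lemma pinB : ∀ u : Fin 6, u ≠ 5 → u ≠ 0 → dd u 0 = 2 → u = 3 ∨ u = 4 := by decide

lemma restA : ∀ u : Fin 6, u ≠ 0 → u ≠ 1 → u ≠ 2 → u ≠ 5 → u = 3 ∨ u = 4 := by decide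
lemma restB : ∀ u : Fin 6, u ≠ 0 → u ≠ 3 → u ≠ 4 → u ≠ 5 → u = 1 ∨ u = 2 := by decide

lemma perm_eq (σ τ : Equiv.Perm (Fin 6)) (h0 : σ 0 = τ 0) (h1 : σ 1 = τ 1)
    (h2 : σ 2 = τ 2) (h3 : σ 3 = τ 3) (h4 : σ 4 = τ 4) (h5 : σ 5 = τ 5) : σ = τ := by
  apply Equiv.ext; intro x; fin_cases x <;> assumption

lemma a6_stab : a6 • X1' = X1' := by decide
lemma b6_stab : b6 • X1' = X1' := by decide

lemma stab_eq : MulAction.stabilizer (Equiv.Perm (Fin 6)) X1' =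
    Subgroup.closure {a6, b6} := by
  apply le_antisymm
  · intro σ hσ
    have h : σ • X1' = X1' := hσ
    have hne : ∀ i j : Fin 6, i ≠ j → σ i ≠ σ j := fun i j hij e => hij (σ.injective e)
    -- σ fixes {5, 0}
    have h50 : dd (σ 5) (σ 0) = 4 := by rw [dd_invariant σ h]; decide
    have hp := pin50 (σ 5) (σ 0) (hne 5 0 (by decide)) h50
    have hb := Subgroup.subset_closure (show b6 ∈ ({a6, b6} : Set _) by simp)
    have ha := Subgroup.subset_closure (show a6 ∈ ({a6, b6} : Set _) by simp)
    have memw : ∀ τ : Equiv.Perm (Fin 6),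
        (τ = 1 ∨ τ = b6 ∨ τ = b6^2 ∨ τ = b6^3 ∨ τ = a6 ∨ τ = a6*b6 ∨
          τ = a6*b6^2 ∨ τ = a6*b6^3) → τ ∈ Subgroup.closure {a6, b6} := by
      rintro τ (rfl|rfl|rfl|rfl|rfl|rfl|rfl|rfl)
      · exact one_mem _
      · exact hb
      · exact pow_mem hb 2
      · exact pow_mem hb 3
      · exact ha
      · exact mul_mem ha hb
      · exact mul_mem ha (pow_mem hb 2)
      · exact mul_mem ha (pow_mem hb 3)
    apply memw σ
    rcases hp with ⟨h5, h0⟩ | ⟨h5, h0⟩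
    · -- σ 5 = 5, σ 0 = 0
      have k1 : σ 1 = 1 ∨ σ 1 = 2 := by
        refine pinA _ (h5 ▸ hne 1 5 (by decide)) (h0 ▸ hne 1 0 (by decide)) ?_
        rw [← h5, dd_invariant σ h]; decide
      have k2 : σ 2 = 1 ∨ σ 2 = 2 := by
        refine pinA _ (h5 ▸ hne 2 5 (by decide)) (h0 ▸ hne 2 0 (by decide)) ?_
        rw [← h5, dd_invariant σ h]; decide
      have h12 := hne 1 2 (by decide)
      rcases k1 with h1 | h1 <;> rcases k2 with h2 | h2
      · exact absurd (h1.trans h2.symm) h12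
      all_goals
        first
        | exact absurd (h1.trans h2.symm) h12
        | (have k3 : σ 3 = 3 ∨ σ 3 = 4 :=
            restA _ (h0 ▸ hne 3 0 (by decide))
              (by first | exact h1 ▸ hne 3 1 (by decide) | exact h2 ▸ hne 3 2 (by decide))
              (by first | exact h1 ▸ hne 3 1 (by decide) | exact h2 ▸ hne 3 2 (by decide))
              (h5 ▸ hne 3 5 (by decide))
           have k4 : σ 4 = 3 ∨ σ 4 = 4 :=
            restA _ (h0 ▸ hne 4 0 (by decide))
              (by first | exact h1 ▸ hne 4 1 (by decide) | exact h2 ▸ hne 4 2 (by decide))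
              (by first | exact h1 ▸ hne 4 1 (by decide) | exact h2 ▸ hne 4 2 (by decide))
              (h5 ▸ hne 4 5 (by decide))
           have h34 := hne 3 4 (by decide)
           rcases k3 with h3 | h3 <;> rcases k4 with h4 | h4 <;>
            [skip; skip; skip; skip] <;>
            first
            | exact absurd (h3.trans h4.symm) h34
            | (refine Or.inl ?_ <;>
                exact perm_eq _ _ (h0.trans (by decide)) (h1.trans (by decide))
                  (h2.trans (by decide)) (h3.trans (by decide)) (h4.trans (by decide))
                  (h5.trans (by decide)))
            | (refine Or.inr (Or.inr (Or.inr (Or.inr (Or.inr (Or.inr (Or.inl ?_)))))) <;>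
                exact perm_eq _ _ (h0.trans (by decide)) (h1.trans (by decide))
                  (h2.trans (by decide)) (h3.trans (by decide)) (h4.trans (by decide))
                  (h5.trans (by decide)))
            | (refine Or.inr (Or.inr (Or.inr (Or.inr (Or.inl ?_)))) <;>
                exact perm_eq _ _ (h0.trans (by decide)) (h1.trans (by decide))
                  (h2.trans (by decide)) (h3.trans (by decide)) (h4.trans (by decide))
                  (h5.trans (by decide)))
            | (refine Or.inr (Or.inl ?_) <;>
                exact perm_eq _ _ (h0.trans (by decide)) (h1.trans (by decide))
                  (h2.trans (by decide)) (h3.trans (by decide)) (h4.trans (by decide))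
                  (h5.trans (by decide)))
            | (refine Or.inr (Or.inr (Or.inl ?_)) <;>
                exact perm_eq _ _ (h0.trans (by decide)) (h1.trans (by decide))
                  (h2.trans (by decide)) (h3.trans (by decide)) (h4.trans (by decide))
                  (h5.trans (by decide)))
            | (refine Or.inr (Or.inr (Or.inr (Or.inl ?_))) <;>
                exact perm_eq _ _ (h0.trans (by decide)) (h1.trans (by decide))
                  (h2.trans (by decide)) (h3.trans (by decide)) (h4.trans (by decide))
                  (h5.trans (by decide)))
            | (refine Or.inr (Or.inr (Or.inr (Or.inr (Or.inr (Or.inl ?_))))) <;>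
                exact perm_eq _ _ (h0.trans (by decide)) (h1.trans (by decide))
                  (h2.trans (by decide)) (h3.trans (by decide)) (h4.trans (by decide))
                  (h5.trans (by decide)))
            | (refine Or.inr (Or.inr (Or.inr (Or.inr (Or.inr (Or.inr (Or.inr ?_)))))) <;>
                exact perm_eq _ _ (h0.trans (by decide)) (h1.trans (by decide))
                  (h2.trans (by decide)) (h3.trans (by decide)) (h4.trans (by decide))
                  (h5.trans (by decide))))
    · -- σ 5 = 0, σ 0 = 5
      have k1 : σ 1 = 3 ∨ σ 1 = 4 := by
        refine pinB _ (h0 ▸ hne 1 0 (by decide)) (h5 ▸ hne 1 5 (by decide)) ?_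
        rw [← h5, dd_invariant σ h]; decide
      have k2 : σ 2 = 3 ∨ σ 2 = 4 := by
        refine pinB _ (h0 ▸ hne 2 0 (by decide)) (h5 ▸ hne 2 5 (by decide)) ?_
        rw [← h5, dd_invariant σ h]; decide
      have h12 := hne 1 2 (by decide)
      rcases k1 with h1 | h1 <;> rcases k2 with h2 | h2
      · exact absurd (h1.trans h2.symm) h12
      all_goals
        first
        | exact absurd (h1.trans h2.symm) h12
        | (have k3 : σ 3 = 1 ∨ σ 3 = 2 :=
            restB _ (h5 ▸ hne 3 5 (by decide))
              (by first | exact h1 ▸ hne 3 1 (by decide) | exact h2 ▸ hne 3 2 (by decide))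
              (by first | exact h1 ▸ hne 3 1 (by decide) | exact h2 ▸ hne 3 2 (by decide))
              (h0 ▸ hne 3 0 (by decide))
           have k4 : σ 4 = 1 ∨ σ 4 = 2 :=
            restB _ (h5 ▸ hne 4 5 (by decide))
              (by first | exact h1 ▸ hne 4 1 (by decide) | exact h2 ▸ hne 4 2 (by decide))
              (by first | exact h1 ▸ hne 4 1 (by decide) | exact h2 ▸ hne 4 2 (by decide))
              (h0 ▸ hne 4 0 (by decide))
           have h34 := hne 3 4 (by decide)
           rcases k3 with h3 | h3 <;> rcases k4 with h4 | h4 <;>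
            [skip; skip; skip; skip] <;>
            first
            | exact absurd (h3.trans h4.symm) h34
            | (refine Or.inl ?_ <;>
                exact perm_eq _ _ (h0.trans (by decide)) (h1.trans (by decide))
                  (h2.trans (by decide)) (h3.trans (by decide)) (h4.trans (by decide))
                  (h5.trans (by decide)))
            | (refine Or.inr (Or.inl ?_) <;>
                exact perm_eq _ _ (h0.trans (by decide)) (h1.trans (by decide))
                  (h2.trans (by decide)) (h3.trans (by decide)) (h4.trans (by decide))
                  (h5.trans (by decide)))
            | (refine Or.inr (Or.inr (Or.inl ?_)) <;>
                exact perm_eq _ _ (h0.trans (by decide)) (h1.trans (by decide))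
                  (h2.trans (by decide)) (h3.trans (by decide)) (h4.trans (by decide))
                  (h5.trans (by decide)))
            | (refine Or.inr (Or.inr (Or.inr (Or.inl ?_))) <;>
                exact perm_eq _ _ (h0.trans (by decide)) (h1.trans (by decide))
                  (h2.trans (by decide)) (h3.trans (by decide)) (h4.trans (by decide))
                  (h5.trans (by decide)))
            | (refine Or.inr (Or.inr (Or.inr (Or.inr (Or.inl ?_)))) <;>
                exact perm_eq _ _ (h0.trans (by decide)) (h1.trans (by decide))
                  (h2.trans (by decide)) (h3.trans (by decide)) (h4.trans (by decide))
                  (h5.trans (by decide)))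
            | (refine Or.inr (Or.inr (Or.inr (Or.inr (Or.inr (Or.inl ?_))))) <;>
                exact perm_eq _ _ (h0.trans (by decide)) (h1.trans (by decide))
                  (h2.trans (by decide)) (h3.trans (by decide)) (h4.trans (by decide))
                  (h5.trans (by decide)))
            | (refine Or.inr (Or.inr (Or.inr (Or.inr (Or.inr (Or.inr (Or.inl ?_)))))) <;>
                exact perm_eq _ _ (h0.trans (by decide)) (h1.trans (by decide))
                  (h2.trans (by decide)) (h3.trans (by decide)) (h4.trans (by decide))
                  (h5.trans (by decide)))
            | (refine Or.inr (Or.inr (Or.inr (Or.inr (Or.inr (Or.inr (Or.inr ?_)))))) <;>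
                exact perm_eq _ _ (h0.trans (by decide)) (h1.trans (by decide))
                  (h2.trans (by decide)) (h3.trans (by decide)) (h4.trans (by decide))
                  (h5.trans (by decide))))
  · rw [Subgroup.closure_le]
    rintro τ hτ
    simp only [Set.mem_insert_iff, Set.mem_singleton_iff] at hτ
    rcases hτ with rfl | rfl
    · exact a6_stab
    · exact b6_stab

def phifun : DihedralGroup 4 → Equiv.Perm (Fin 6)
  | .r i => b6 ^ i.val
  | .sr i => a6 * b6 ^ i.val

lemma phifun_mul : ∀ x y : DihedralGroup 4, phifun (x * y) = phifun x * phifun y := by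
  decide

def phi : DihedralGroup 4 →* Equiv.Perm (Fin 6) :=
  { toFun := phifun, map_one' := by decide, map_mul' := phifun_mul }

lemma phi_inj : Function.Injective phi := by
  intro x y hxy
  revert hxy
  revert x y
  decide

lemma phi_range : phi.range = Subgroup.closure {a6, b6} := by
  apply le_antisymm
  · rintro τ ⟨x, rfl⟩
    have hb := Subgroup.subset_closure (show b6 ∈ ({a6, b6} : Set _) by simp)
    have ha := Subgroup.subset_closure (show a6 ∈ ({a6, b6} : Set _) by simp)
    cases x with
    | r i => exact pow_mem hb _
    | sr i => exact mul_mem ha (pow_mem hb _)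
  · rw [Subgroup.closure_le]
    rintro τ hτ
    simp only [Set.mem_insert_iff, Set.mem_singleton_iff] at hτ
    rcases hτ with rfl | rfl
    · exact ⟨.sr 0, by decide⟩
    · exact ⟨.r 1, by decide⟩

/-- The stabilizer of `X′₁` in `S₆` is generated by `(1,2)` and `(1,3,2,4)(5,6)`,
and is dihedral of order 8. -/
theorem stabilizer_X1'_dihedral_of_order_eight :
    MulAction.stabilizer (Equiv.Perm (Fin 6)) X1' =
      Subgroup.closure {Equiv.swap 1 2, c1324 * Equiv.swap 5 6} ∧
    Nonempty ((MulAction.stabilizer (Equiv.Perm (Fin 6)) X1') ≃* DihedralGroup 4) := by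
  have key : MulAction.stabilizer (Equiv.Perm (Fin 6)) X1' =
      Subgroup.closure {Equiv.swap 1 2, c1324 * Equiv.swap 5 6} := stab_eq
  refine ⟨key, ⟨?_⟩⟩
  exact (MulEquiv.subgroupCongr (stab_eq.trans phi_range.symm)).trans
    (MonoidHom.ofInjective phi_inj).symm
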